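/- Let L and R be nonempty subsets of a group G with G = W(L∪L⁻¹)·W(R∪R⁻¹), and let k be the minimum weak connection length of G relative to (L,R), assumed finite. Then 2S(G;L,R) has exactly k weakly connected components, all of the same cardinality. -/

import Mathlib

open Relation Pointwise

/-- `w` is a product of a list of `n` elements of `S`. -/
def IsWord {G : Type*} [Group G] (S : Set G) (n : ℕ) (w : G) : Prop :=
  ∃ l : List G, l.length = n ∧ (∀ x ∈ l, x ∈ S) ∧ l.prod = w

/-- The set of all positive-length words in `S`. -/
def WordSet {G : Type*} [Group G] (S : Set G) : Set G :=
  {w | ∃ n : ℕ, 0 < n ∧ IsWord S n w}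

/-- Arc of the two-sided group digraph `2S(G;L,R)`. -/
def Arc {G : Type*} [Group G] (L R : Set G) (g h : G) : Prop :=
  ∃ l ∈ L, ∃ r ∈ R, h = l⁻¹ * g * r

/-- Existence of a directed path (possibly of length 0). -/
def DPath {G : Type*} [Group G] (L R : Set G) : G → G → Prop :=
  ReflTransGen (Arc L R)

/-- Weak connectivity: path ignoring directions. -/
def WeakConn {G : Type*} [Group G] (L R : Set G) : G → G → Prop :=
  ReflTransGen (fun g h => Arc L R g h ∨ Arc L R h g)

/-- Strong connectivity of two vertices. -/
def StrongConn {G : Type*} [Group G] (L R : Set G) (g h : G) : Prop :=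
  DPath L R g h ∧ DPath L R h g

/-!
An arc `x → l⁻¹ x r` says that left multiplication by `l ∈ L` and right multiplication by
`r ∈ R` lead into the same weak component; iterating, `lⁿ x` and `x rⁿ` are weakly connected.
Choosing `r` to be the one carried by a given arc, this shows that left translation by powers of
a fixed `a ∈ L` maps weak components onto weak components, and that on components every element
of `L ∪ L⁻¹` acting on the left, and every element of `R ∪ R⁻¹` acting on the right, acts like
`a` or `a⁻¹`. Since `G = W(L ∪ L⁻¹) W(R ∪ R⁻¹)`, every vertex is weakly connected to a power of
`a`. The exponents `m` with `aᵐ` weakly connected to `1` form a subgroup of `ℤ` whose least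
positive element is the minimum weak connection length `k`, so the components are the classes of
`aᵖ` for `p ∈ ℤ/k`, and translations by powers of `a` permute them transitively.
-/

section

variable {G : Type*} [Group G] {L R : Set G}

namespace WeakConn

protected theorem refl (x : G) : WeakConn L R x x := ReflTransGen.refl

protected theorem symm {x y : G} (h : WeakConn L R x y) : WeakConn L R y x := by
  induction h with
  | refl => exact ReflTransGen.refl
  | tail _ hstep ih => exact ReflTransGen.head hstep.symm ih

protected theorem trans {x y z : G} (h : WeakConn L R x y) (h' : WeakConn L R y z) :
    WeakConn L R x z :=
  ReflTransGen.trans h h'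

theorem of_arc {l r : G} (hl : l ∈ L) (hr : r ∈ R) (x : G) : WeakConn L R x (l⁻¹ * x * r) :=
  ReflTransGen.single (Or.inl ⟨l, hl, r, hr, rfl⟩)

end WeakConn

theorem weakConn_zpow_mul_mul_zpow {l r : G} (hl : l ∈ L) (hr : r ∈ R) (n : ℤ) (x : G) :
    WeakConn L R (l ^ n * x) (x * r ^ n) := by
  induction n using Int.induction_on generalizing x with
  | zero => simpa using WeakConn.refl x
  | succ n ih =>
    have hstep := WeakConn.of_arc hl hr (l ^ ((n : ℤ) + 1) * x)
    rw [show l⁻¹ * (l ^ ((n : ℤ) + 1) * x) * r = l ^ (n : ℤ) * (x * r) by group] at hstep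
    rw [show x * r ^ ((n : ℤ) + 1) = x * r * r ^ (n : ℤ) by group]
    exact hstep.trans (ih (x * r))
  | pred n ih =>
    have hstep := (WeakConn.of_arc hl hr (l ^ (-n : ℤ) * (x * r⁻¹))).symm
    rw [show l⁻¹ * (l ^ (-n : ℤ) * (x * r⁻¹)) * r = l ^ (-n - 1 : ℤ) * x by group] at hstep
    rw [show x * r ^ (-(n : ℤ) - 1) = x * r⁻¹ * r ^ (-n : ℤ) by group]
    exact hstep.trans (ih (x * r⁻¹))

theorem Arc.weakConn_zpow_mul {x y l : G} (h : Arc L R x y) (hl : l ∈ L) (n : ℤ) :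
    WeakConn L R (l ^ n * x) (l ^ n * y) := by
  obtain ⟨a, ha, r, hr, rfl⟩ := h
  have harc := WeakConn.of_arc ha hr (x * r ^ n)
  rw [show a⁻¹ * (x * r ^ n) * r = a⁻¹ * x * r * r ^ n by group] at harc
  exact ((weakConn_zpow_mul_mul_zpow hl hr n x).trans harc).trans
    (weakConn_zpow_mul_mul_zpow hl hr n _).symm

theorem WeakConn.zpow_mul {x y l : G} (h : WeakConn L R x y) (hl : l ∈ L) (n : ℤ) :
    WeakConn L R (l ^ n * x) (l ^ n * y) := by
  refine ReflTransGen.lift' (fun g => l ^ n * g) (fun u v huv => ?_) _ _ h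
  rcases huv with huv | hvu
  · exact huv.weakConn_zpow_mul hl n
  · exact (hvu.weakConn_zpow_mul hl n).symm

theorem weakConn_zpow_mul_iff {x y l : G} (hl : l ∈ L) (n : ℤ) :
    WeakConn L R (l ^ n * x) (l ^ n * y) ↔ WeakConn L R x y := by
  refine ⟨fun h => ?_, fun h => h.zpow_mul hl n⟩
  simpa [← mul_assoc, ← zpow_add] using h.zpow_mul hl (-n)

theorem weakConn_mul_of_mem_left {s a r : G} (hs : s ∈ L) (ha : a ∈ L) (hr : r ∈ R) (x : G) :
    WeakConn L R (s * x) (a ^ (1 : ℤ) * x) := by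
  simpa using (weakConn_zpow_mul_mul_zpow hs hr 1 x).trans
    (weakConn_zpow_mul_mul_zpow ha hr 1 x).symm

theorem weakConn_mul_of_mem_inv_left {s a r : G} (hs : s ∈ L⁻¹) (ha : a ∈ L) (hr : r ∈ R)
    (x : G) : WeakConn L R (s * x) (a ^ (-1 : ℤ) * x) := by
  simpa using (weakConn_zpow_mul_mul_zpow (Set.mem_inv.mp hs) hr (-1) x).trans
    (weakConn_zpow_mul_mul_zpow ha hr (-1) x).symm

theorem weakConn_mul_of_mem_right {s a : G} (hs : s ∈ R) (ha : a ∈ L) (x : G) :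
    WeakConn L R (x * s) (a ^ (1 : ℤ) * x) := by
  simpa using (weakConn_zpow_mul_mul_zpow ha hs 1 x).symm

theorem weakConn_mul_of_mem_inv_right {s a : G} (hs : s ∈ R⁻¹) (ha : a ∈ L) (x : G) :
    WeakConn L R (x * s) (a ^ (-1 : ℤ) * x) := by
  simpa using (weakConn_zpow_mul_mul_zpow ha (Set.mem_inv.mp hs) (-1) x).symm

theorem weakConn_list_prod_mul {a : G} (ha : a ∈ L) (f : G → ℤ) {ls : List G}
    (h : ∀ s ∈ ls, ∀ x, WeakConn L R (s * x) (a ^ f s * x)) (x : G) :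
    WeakConn L R (ls.prod * x) (a ^ (ls.map f).sum * x) := by
  induction ls generalizing x with
  | nil => simpa using WeakConn.refl x
  | cons s t ih =>
    have hs := h s List.mem_cons_self (t.prod * x)
    have ht := (ih (fun s hs => h s (List.mem_cons_of_mem _ hs)) x).zpow_mul ha (f s)
    simpa [mul_assoc, zpow_add] using hs.trans ht

theorem weakConn_mul_list_prod {a : G} (ha : a ∈ L) (f : G → ℤ) {ls : List G}
    (h : ∀ s ∈ ls, ∀ x, WeakConn L R (x * s) (a ^ f s * x)) (x : G) :
    WeakConn L R (x * ls.prod) (a ^ (ls.map f).sum * x) := by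
  induction ls generalizing x with
  | nil => simpa using WeakConn.refl x
  | cons s t ih =>
    have ht := ih (fun s hs => h s (List.mem_cons_of_mem _ hs)) (x * s)
    have hs := (h s List.mem_cons_self x).zpow_mul ha (t.map f).sum
    rw [List.prod_cons, List.map_cons, List.sum_cons, add_comm, zpow_add, ← mul_assoc x,
      mul_assoc (a ^ _)]
    exact ht.trans hs

theorem IsWord.weakConn_zpow_of_mul_left {S : Set G} {n : ℕ} {w a : G} (hw : IsWord S n w)
    (ha : a ∈ L) {e : ℤ} (hS : ∀ s ∈ S, ∀ x, WeakConn L R (s * x) (a ^ e * x)) :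
    WeakConn L R w (a ^ (n * e)) := by
  obtain ⟨ls, rfl, hls, rfl⟩ := hw
  simpa using weakConn_list_prod_mul ha (fun _ => e) (fun s hs => hS s (hls s hs)) 1

theorem IsWord.weakConn_zpow_of_mul_right {S : Set G} {n : ℕ} {w a : G} (hw : IsWord S n w)
    (ha : a ∈ L) {e : ℤ} (hS : ∀ s ∈ S, ∀ x, WeakConn L R (x * s) (a ^ e * x)) :
    WeakConn L R w (a ^ (n * e)) := by
  obtain ⟨ls, rfl, hls, rfl⟩ := hw
  simpa using weakConn_mul_list_prod ha (fun _ => e) (fun s hs => hS s (hls s hs)) 1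

theorem exists_weakConn_zpow {a r : G} (ha : a ∈ L) (hr : r ∈ R)
    (hG : WordSet (L ∪ L⁻¹) * WordSet (R ∪ R⁻¹) = Set.univ) (g : G) :
    ∃ p : ℤ, WeakConn L R g (a ^ p) := by
  classical
  obtain ⟨-, ⟨-, -, ls, -, hls, rfl⟩, -, ⟨-, -, ms, -, hms, rfl⟩, rfl⟩ :=
    hG.symm ▸ Set.mem_univ g
  have hleft : ∀ s ∈ ls, ∀ x, WeakConn L R (s * x) (a ^ (if s ∈ L then 1 else -1 : ℤ) * x) := by
    intro s hs x
    split_ifs with hsL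
    · exact weakConn_mul_of_mem_left hsL ha hr x
    · exact weakConn_mul_of_mem_inv_left ((hls s hs).resolve_left hsL) ha hr x
  have hright : ∀ s ∈ ms, ∀ x, WeakConn L R (x * s) (a ^ (if s ∈ R then 1 else -1 : ℤ) * x) := by
    intro s hs x
    split_ifs with hsR
    · exact weakConn_mul_of_mem_right hsR ha x
    · exact weakConn_mul_of_mem_inv_right ((hms s hs).resolve_left hsR) ha x
  obtain ⟨p, hp⟩ : ∃ p : ℤ, ∀ x, WeakConn L R (ls.prod * x) (a ^ p * x) :=
    ⟨_, weakConn_list_prod_mul ha _ hleft⟩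
  obtain ⟨q, hq⟩ : ∃ q : ℤ, ∀ x, WeakConn L R (x * ms.prod) (a ^ q * x) :=
    ⟨_, weakConn_mul_list_prod ha _ hright⟩
  refine ⟨q + p, (hq _).trans ?_⟩
  simpa [zpow_add, mul_assoc] using (hp 1).zpow_mul ha q

def connPeriods (L R : Set G) (a : G) : AddSubgroup ℤ where
  carrier := {m | ∀ n, WeakConn L R (a ^ (m + n)) (a ^ n)}
  zero_mem' n := by simpa using WeakConn.refl _
  add_mem' {m₁ m₂} h₁ h₂ n := by
    simpa [add_assoc] using (h₁ (m₂ + n)).trans (h₂ n)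
  neg_mem' {m} h n := by
    simpa using (h (-m + n)).symm

theorem zpow_weakConn_zpow_iff {a : G} (ha : a ∈ L) (p q : ℤ) :
    WeakConn L R (a ^ p) (a ^ q) ↔ p - q ∈ connPeriods L R a := by
  refine ⟨fun h n => ?_, fun h => by simpa using h q⟩
  have := h.zpow_mul ha (n - q)
  rwa [← zpow_add, ← zpow_add, sub_add_cancel, show n - q + p = p - q + n by ring] at this

theorem natCast_mem_connPeriods {a r w : G} (ha : a ∈ L) (hr : r ∈ R) {n : ℕ}
    (hw : IsWord L n w ∨ IsWord L⁻¹ n w ∨ IsWord R n w ∨ IsWord R⁻¹ n w)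
    (hw1 : WeakConn L R w 1) : (n : ℤ) ∈ connPeriods L R a := by
  suffices WeakConn L R (a ^ (n : ℤ)) 1 ∨ WeakConn L R (a ^ (-n : ℤ)) 1 by
    simp only [← zpow_zero a, zpow_weakConn_zpow_iff ha, sub_zero] at this
    exact this.elim id neg_mem_iff.mp
  rcases hw with hw | hw | hw | hw
  · have := hw.weakConn_zpow_of_mul_left ha fun s hs => weakConn_mul_of_mem_left hs ha hr
    exact .inl (by simpa using this.symm.trans hw1)
  · have := hw.weakConn_zpow_of_mul_left ha fun s hs => weakConn_mul_of_mem_inv_left hs ha hr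
    exact .inr (by simpa using this.symm.trans hw1)
  · have := hw.weakConn_zpow_of_mul_right ha fun s hs => weakConn_mul_of_mem_right hs ha
    exact .inl (by simpa using this.symm.trans hw1)
  · have := hw.weakConn_zpow_of_mul_right ha fun s hs => weakConn_mul_of_mem_inv_right hs ha
    exact .inr (by simpa using this.symm.trans hw1)

theorem zpow_weakConn_zpow_iff_dvd {a r : G} (ha : a ∈ L) (hr : r ∈ R) {k : ℕ}
    (hk : IsLeast {n : ℕ | 0 < n ∧ ∃ w : G,
        (IsWord L n w ∨ IsWord L⁻¹ n w ∨ IsWord R n w ∨ IsWord R⁻¹ n w) ∧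
        WeakConn L R w 1} k) (p q : ℤ) :
    WeakConn L R (a ^ p) (a ^ q) ↔ (k : ℤ) ∣ p - q := by
  have hmin : IsLeast {m : ℤ | m ∈ connPeriods L R a ∧ 0 < m} k := by
    obtain ⟨⟨hk0, w, hw, hw1⟩, hlow⟩ := hk
    refine ⟨⟨natCast_mem_connPeriods ha hr hw hw1, by exact_mod_cast hk0⟩, ?_⟩
    rintro m ⟨hm, hm0⟩
    lift m to ℕ using hm0.le
    have hpow : IsWord L m (a ^ m) :=
      ⟨List.replicate m a, List.length_replicate, fun x hx => List.eq_of_mem_replicate hx ▸ ha,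
        List.prod_replicate m a⟩
    have hpow1 : WeakConn L R (a ^ m) 1 := by
      simpa using (zpow_weakConn_zpow_iff ha m 0).2 (by simpa using hm)
    exact_mod_cast hlow ⟨by exact_mod_cast hm0, _, .inl hpow, hpow1⟩
  rw [zpow_weakConn_zpow_iff ha, AddSubgroup.cyclic_of_min hmin,
    ← AddSubgroup.zmultiples_eq_closure, Int.mem_zmultiples_iff]

theorem setOf_weakConn_eq_iff {g g' : G} :
    {h | WeakConn L R g h} = {h | WeakConn L R g' h} ↔ WeakConn L R g g' := by
  refine ⟨fun h => ?_, fun h => Set.ext fun x => ⟨h.symm.trans, h.trans⟩⟩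
  exact (h ▸ WeakConn.refl g' : g' ∈ {x | WeakConn L R g x})

end

theorem nonempty_equiv_fin_of_surjective_of_eq_iff_dvd {α : Type*} {k : ℕ} [NeZero k]
    (f : ℤ → α) (hf : Function.Surjective f) (hfk : ∀ p q, f p = f q ↔ (k : ℤ) ∣ p - q) :
    Nonempty (α ≃ Fin k) := by
  have hker : ∀ p q, Setoid.ker f p q ↔ Setoid.ker ((↑) : ℤ → ZMod k) p q := fun p q => by
    rw [Setoid.ker_def, Setoid.ker_def, hfk, ZMod.intCast_eq_intCast_iff_dvd_sub, ← dvd_neg,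
      neg_sub]
  exact ⟨(Setoid.quotientKerEquivOfSurjective f hf).symm.trans <|
    (Quotient.congrRight hker).trans <|
    (Setoid.quotientKerEquivOfSurjective _ ZMod.intCast_surjective).trans (ZMod.finEquiv k).symm⟩

theorem stmt_8 {G : Type*} [Group G] (L R : Set G) (hL : L.Nonempty) (hR : R.Nonempty)
    (hG : WordSet (L ∪ L⁻¹) * WordSet (R ∪ R⁻¹) = Set.univ)
    (k : ℕ)
    (hk : IsLeast {n : ℕ | 0 < n ∧ ∃ w : G,
        (IsWord L n w ∨ IsWord L⁻¹ n w ∨ IsWord R n w ∨ IsWord R⁻¹ n w) ∧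
        WeakConn L R w 1} k) :
    Nonempty ({C : Set G | ∃ g : G, C = {h | WeakConn L R g h}} ≃ Fin k) ∧
    ∀ C ∈ {C : Set G | ∃ g : G, C = {h | WeakConn L R g h}},
      ∀ D ∈ {C : Set G | ∃ g : G, C = {h | WeakConn L R g h}},
        Nonempty (C ≃ D) := by
  obtain ⟨a, ha⟩ := hL
  obtain ⟨r, hr⟩ := hR
  have hrep := exists_weakConn_zpow ha hr hG
  have : NeZero k := ⟨hk.1.1.ne'⟩
  refine ⟨nonempty_equiv_fin_of_surjective_of_eq_iff_dvd
    (fun p => ⟨{h | WeakConn L R (a ^ p) h}, _, rfl⟩) ?_ (fun p q => ?_), ?_⟩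
  · rintro ⟨C, g, rfl⟩
    obtain ⟨p, hp⟩ := hrep g
    exact ⟨p, Subtype.ext (setOf_weakConn_eq_iff.2 hp.symm)⟩
  · rw [Subtype.mk.injEq, setOf_weakConn_eq_iff, zpow_weakConn_zpow_iff_dvd ha hr hk]
  · rintro _ ⟨g, rfl⟩ _ ⟨g', rfl⟩
    obtain ⟨p, hp⟩ := hrep g
    obtain ⟨q, hq⟩ := hrep g'
    have hshift : WeakConn L R (a ^ (q - p) * g) g' := by
      have := hp.zpow_mul ha (q - p)
      rw [← zpow_add, sub_add_cancel] at this
      exact this.trans hq.symm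
    exact ⟨((Equiv.mulLeft (a ^ (q - p))).subtypeEquiv fun h =>
      (weakConn_zpow_mul_iff ha _).symm).trans (Equiv.setCongr (setOf_weakConn_eq_iff.2 hshift))⟩
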